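/- Let A, B be hoops and p : A → B, s : B → A hoop homomorphisms with p ∘ s = id_B and with s a strong section (a → s(b) = s(p(a)) → s(b) for all a ∈ A, b ∈ B), and let X = {a ∈ A | p(a) = 1}. Then for all x, x' ∈ X and b ∈ B: (i) ((x → s(b)) · x') → s(b) = 1; (ii) ((((x → s(b)) · x') → s(b)) → s(b)) → ((x → s(b)) · x') = s(b) → (s(b) · x'). Consequently the maps a ↦ (s(p(a)) → a, p(a)) and (x, b) ↦ s(b) · x are mutually inverse bijections between A and the set Y' = {(x, b) ∈ X × B | s(b) → (s(b) · x) = x}. -/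

import Mathlib

class Hoop (α : Type*) extends CommMonoid α, HImp α where
  himp_self : ∀ x : α, x ⇨ x = 1
  mul_himp_comm : ∀ x y : α, x * (x ⇨ y) = y * (y ⇨ x)
  mul_himp_assoc : ∀ x y z : α, (x * y) ⇨ z = x ⇨ (y ⇨ z)

/-! For `x` in the kernel, strength of the section gives `x → s b = s 1 → s b = s b`, so in (i) and (ii)
the factor `x → s b` collapses to `s b`, after which both identities are hoop arithmetic. Every `a`
lies above `s (p a)` (again by strength, `a → s (p a) = s (p a) → s (p a) = 1`), so divisibility
gives `a = s (p a) · (s (p a) → a)`; conversely `p (s b · x) = b · 1 = b` for `x` in the kernel. -/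

namespace Hoop

variable {α : Type*} [Hoop α]

theorem one_himp_himp (x y : α) : (1 : α) ⇨ (x ⇨ y) = x ⇨ y := by
  rw [← mul_himp_assoc, one_mul]

theorem one_himp (x : α) : (1 : α) ⇨ x = x := by
  set u := (1 : α) ⇨ x
  have hu : x * (x ⇨ 1) = u := by rw [mul_himp_comm x 1, one_mul]
  have hxu : x ⇨ u = 1 := by rw [← mul_himp_assoc, mul_one, himp_self]
  have hux : u ⇨ x = (x ⇨ 1) ⇨ 1 := by rw [← hu, mul_comm, mul_himp_assoc, himp_self]
  have hdiv : (x ⇨ 1) * ((x ⇨ 1) ⇨ 1) = x ⇨ 1 := by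
    rw [mul_himp_comm (x ⇨ 1) 1, one_mul, one_himp_himp]
  symm
  calc x = u * (u ⇨ x) := by rw [← mul_himp_comm, hxu, mul_one]
    _ = x * ((x ⇨ 1) * ((x ⇨ 1) ⇨ 1)) := by rw [hux, ← hu, mul_assoc]
    _ = u := by rw [hdiv, hu]

theorem mul_himp_eq_of_himp_eq_one {x y : α} (h : x ⇨ y = 1) : y * (y ⇨ x) = x := by
  rw [← mul_himp_comm, h, mul_one]

end Hoop

section StrongSection

variable {A B : Type*} [Hoop A] [Hoop B]

theorem himp_section_eq_of_map_eq_one {p : A → B} {s : B → A} (hs1 : s 1 = 1)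
    (hss : ∀ (a : A) (b : B), a ⇨ s b = s (p a) ⇨ s b) {x : A} (hx : p x = 1) (b : B) :
    x ⇨ s b = s b := by
  rw [hss, hx, hs1, Hoop.one_himp]

theorem mul_himp_section_eq_one {p : A → B} {s : B → A} (hs1 : s 1 = 1)
    (hss : ∀ (a : A) (b : B), a ⇨ s b = s (p a) ⇨ s b) {x x' : A} (hx : p x = 1)
    (hx' : p x' = 1) (b : B) : (x ⇨ s b) * x' ⇨ s b = 1 := by
  rw [Hoop.mul_himp_assoc, himp_section_eq_of_map_eq_one hs1 hss hx,
    himp_section_eq_of_map_eq_one hs1 hss hx', Hoop.himp_self]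

end StrongSection

theorem section_map_mul_himp {A B : Type*} [Hoop A] {p : A → B} {s : B → A}
    (hss : ∀ (a : A) (b : B), a ⇨ s b = s (p a) ⇨ s b) (a : A) :
    s (p a) * (s (p a) ⇨ a) = a :=
  Hoop.mul_himp_eq_of_himp_eq_one (by rw [hss, Hoop.himp_self])

theorem stmt2_general {A B : Type*} [Hoop A] [Hoop B] (p : A → B) (s : B → A)
    (hpm : ∀ a a' : A, p (a * a') = p a * p a')
    (hpi : ∀ a a' : A, p (a ⇨ a') = p a ⇨ p a')
    (hs1 : s 1 = 1)
    (hps : ∀ b : B, p (s b) = b)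
    (hss : ∀ (a : A) (b : B), a ⇨ s b = s (p a) ⇨ s b) :
    -- (i) and (ii)
    (∀ (x x' : A) (b : B), p x = 1 → p x' = 1 →
      (((x ⇨ s b) * x') ⇨ s b = 1) ∧
      ((((x ⇨ s b) * x') ⇨ s b) ⇨ s b) ⇨ ((x ⇨ s b) * x') = s b ⇨ (s b * x')) ∧
    -- a ↦ (s(p a) → a, p a) lands in Y' and (x,b) ↦ s b · x is a left inverse
    (∀ a : A,
      p (s (p a) ⇨ a) = 1 ∧
      s (p a) ⇨ (s (p a) * (s (p a) ⇨ a)) = s (p a) ⇨ a ∧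
      s (p a) * (s (p a) ⇨ a) = a) ∧
    -- (x,b) ↦ s b · x followed by a ↦ (s(p a) → a, p a) is the identity on Y'
    (∀ (x : A) (b : B), p x = 1 → s b ⇨ (s b * x) = x →
      s (p (s b * x)) ⇨ (s b * x) = x ∧ p (s b * x) = b) := by
  refine ⟨fun x x' b hx hx' => ?_, fun a => ?_, fun x b hx hY => ?_⟩
  · have hi := mul_himp_section_eq_one hs1 hss hx hx' b
    refine ⟨hi, ?_⟩
    rw [hi, Hoop.one_himp, himp_section_eq_of_map_eq_one hs1 hss hx]
  · have hdecomp := section_map_mul_himp hss a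
    exact ⟨by rw [hpi, hps, Hoop.himp_self], by rw [hdecomp], hdecomp⟩
  · have hpb : p (s b * x) = b := by rw [hpm, hps, hx, mul_one]
    exact ⟨by rw [hpb, hY], hpb⟩

/-- For a split epimorphism of hoops `p : A → B` with strong section `s`
(`a → s b = s(p a) → s b`) and kernel `X = {a | p a = 1}`:
(i) `((x → s b) · x') → s b = 1` for `x, x' ∈ X`;
(ii) `((((x → s b) · x') → s b) → s b) → ((x → s b) · x') = s b → (s b · x')`;
and the maps `a ↦ (s(p a) → a, p a)` and `(x,b) ↦ s b · x` are mutually inverse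
bijections between `A` and `Y' = {(x,b) ∈ X × B | s b → (s b · x) = x}`. -/
theorem stmt2 {A B : Type*} [Hoop A] [Hoop B] (p : A → B) (s : B → A)
    (hp1 : p 1 = 1) (hpm : ∀ a a' : A, p (a * a') = p a * p a')
    (hpi : ∀ a a' : A, p (a ⇨ a') = p a ⇨ p a')
    (hs1 : s 1 = 1) (hsm : ∀ b b' : B, s (b * b') = s b * s b')
    (hsi : ∀ b b' : B, s (b ⇨ b') = s b ⇨ s b')
    (hps : ∀ b : B, p (s b) = b)
    (hss : ∀ (a : A) (b : B), a ⇨ s b = s (p a) ⇨ s b) :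
    -- (i) and (ii)
    (∀ (x x' : A) (b : B), p x = 1 → p x' = 1 →
      (((x ⇨ s b) * x') ⇨ s b = 1) ∧
      ((((x ⇨ s b) * x') ⇨ s b) ⇨ s b) ⇨ ((x ⇨ s b) * x') = s b ⇨ (s b * x')) ∧
    -- a ↦ (s(p a) → a, p a) lands in Y' and (x,b) ↦ s b · x is a left inverse
    (∀ a : A,
      p (s (p a) ⇨ a) = 1 ∧
      s (p a) ⇨ (s (p a) * (s (p a) ⇨ a)) = s (p a) ⇨ a ∧
      s (p a) * (s (p a) ⇨ a) = a) ∧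
    -- (x,b) ↦ s b · x followed by a ↦ (s(p a) → a, p a) is the identity on Y'
    (∀ (x : A) (b : B), p x = 1 → s b ⇨ (s b * x) = x →
      s (p (s b * x)) ⇨ (s b * x) = x ∧ p (s b * x) = b) :=
  stmt2_general p s hpm hpi hs1 hps hss
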